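/- Let x_- < x_+ be real numbers, d = x_+ - x_-, y = (x_- + x_+)/2, and let α, λ ∈ ℝ. Then there exists a δ-Neumann eigenfunction for (α, λ) on [x_-, x_+] if and only if λ ∈ Π_d^N or (λ ∉ Π_d^N and F_d^N(λ) = α). -/

import Mathlib

/-- The set `Π_d^N = { (π(2k-1)/d)² : k ∈ ℕ, k ≥ 1 }`. -/
noncomputable def PiN (d : ℝ) : Set ℝ :=
  {x | ∃ k : ℕ, 1 ≤ k ∧ x = (Real.pi * (2 * (k : ℝ) - 1) / d) ^ 2}

/-- The function `F_d^N`. -/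
noncomputable def FN (d lam : ℝ) : ℝ :=
  if 0 < lam then 2 * Real.sqrt lam * Real.tan (d * Real.sqrt lam / 2)
  else if lam = 0 then 0
  else -2 * Real.sqrt (-lam) * Real.tanh (d * Real.sqrt (-lam) / 2)

noncomputable def muC (lam : ℝ) : ℂ :=
  if 0 ≤ lam then (Real.sqrt lam : ℂ) else (Real.sqrt (-lam) : ℂ) * Complex.I

lemma muC_sq (lam : ℝ) : muC lam ^ 2 = (lam : ℂ) := by
  unfold muC
  split_ifs with h
  · rw [← Complex.ofReal_pow, Real.sq_sqrt h]
  · rw [mul_pow, Complex.I_sq, ← Complex.ofReal_pow, Real.sq_sqrt (by linarith)]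
    push_cast; ring

lemma hasDerivAt_ccos' (μ p q : ℂ) (x : ℝ) :
    HasDerivAt (fun t : ℝ => Complex.cos (μ * (p * t + q)))
      (-(Complex.sin (μ * (p * x + q))) * (μ * p)) x := by
  have hin : ∀ z : ℂ, HasDerivAt (fun z : ℂ => μ * (p * z + q)) (μ * p) z := by
    intro z
    simpa using (((hasDerivAt_id z).const_mul p).add_const q).const_mul μ
  exact ((Complex.hasDerivAt_cos (μ * (p * x + q))).comp (x : ℂ) (hin x)).comp_ofReal

lemma hasDerivAt_csin' (μ p q : ℂ) (x : ℝ) :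
    HasDerivAt (fun t : ℝ => Complex.sin (μ * (p * t + q)))
      ((Complex.cos (μ * (p * x + q))) * (μ * p)) x := by
  have hin : ∀ z : ℂ, HasDerivAt (fun z : ℂ => μ * (p * z + q)) (μ * p) z := by
    intro z
    simpa using (((hasDerivAt_id z).const_mul p).add_const q).const_mul μ
  exact ((Complex.hasDerivAt_sin (μ * (p * x + q))).comp (x : ℂ) (hin x)).comp_ofReal

lemma deriv_ccos' (μ p q : ℂ) :
    deriv (fun t : ℝ => Complex.cos (μ * (p * t + q)))
      = fun x : ℝ => -(Complex.sin (μ * (p * x + q))) * (μ * p) := by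
  funext x; exact (hasDerivAt_ccos' μ p q x).deriv

lemma deriv2_ccos' (μ p q : ℂ) (x : ℝ) :
    deriv (deriv (fun t : ℝ => Complex.cos (μ * (p * t + q)))) x
      = -((μ*p)^2 * Complex.cos (μ * (p * x + q))) := by
  rw [deriv_ccos']
  have : HasDerivAt (fun x : ℝ => -(Complex.sin (μ * (p * x + q))) * (μ * p))
      (-((μ*p)^2 * Complex.cos (μ * (p * x + q)))) x := by
    have := ((hasDerivAt_csin' μ p q x).neg).mul_const (μ * p)
    convert this using 1
    · rfl
    · rfl
    · ring
  exact this.deriv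

lemma contDiff_ccos' (μ p q : ℂ) : ContDiff ℝ 2 (fun t : ℝ => Complex.cos (μ * (p * t + q))) := by
  apply (Complex.contDiff_cos.restrict_scalars ℝ).comp
  have h1 : ContDiff ℝ 2 (fun t : ℝ => (t : ℂ)) := Complex.ofRealCLM.contDiff
  fun_prop

lemma lemA (μ : ℂ) (a b : ℝ) (hab : a < b) (v : ℝ → ℂ) (hv : ContDiff ℝ 2 v)
    (hode : ∀ x ∈ Set.Icc a b, deriv (deriv v) x = -(μ^2 * v x))
    (hneu : deriv v a = 0) :
    (∀ x ∈ Set.Icc a b, v x = v a * Complex.cos (μ * (x - a))) ∧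
    (∀ x ∈ Set.Icc a b, deriv v x = v a * (-(μ * Complex.sin (μ * (x - a))))) := by
  have hv2 : ContDiff ℝ (1+1) v := by norm_num at hv ⊢; exact hv
  have hvd : Differentiable ℝ v := (contDiff_succ_iff_deriv.mp hv2).1
  have hv1 : ContDiff ℝ 1 (deriv v) := (contDiff_succ_iff_deriv.mp hv2).2.2
  have hvd1 : Differentiable ℝ (deriv v) := hv1.differentiable one_ne_zero
  -- C and S
  set C : ℝ → ℂ := fun t => Complex.cos (μ * (t + -(a:ℝ))) with hC
  set Sn : ℝ → ℂ := fun t => Complex.sin (μ * (t + -(a:ℝ))) with hS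
  have hCd : ∀ x : ℝ, HasDerivAt C (-(Sn x) * μ) x := by
    intro x; simpa [hS] using hasDerivAt_ccos' μ 1 (-a : ℝ) x
  have hSd : ∀ x : ℝ, HasDerivAt Sn (C x * μ) x := by
    intro x; simpa [hC] using hasDerivAt_csin' μ 1 (-a : ℝ) x
  have hpyth : ∀ x : ℝ, C x ^ 2 + Sn x ^ 2 = 1 := fun x => Complex.cos_sq_add_sin_sq _
  have hCa : C a = 1 := by simp [hC]
  have hSa : Sn a = 0 := by simp [hS]
  -- g1 := v' * C + v * (μ * Sn)
  set g1 : ℝ → ℂ := fun x => deriv v x * C x + v x * (μ * Sn x) with hg1def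
  have hg1 : ∀ x ∈ Set.Icc a b, g1 x = 0 := by
    have key : ∀ x ∈ Set.Icc a b, g1 x = g1 a := by
      apply constant_of_has_deriv_right_zero
      · apply Continuous.continuousOn
        exact (hvd1.continuous.mul (Complex.continuous_cos.comp (by fun_prop))).add
          (hvd.continuous.mul (continuous_const.mul (Complex.continuous_sin.comp (by fun_prop))))
      · intro x hx
        have h1 : HasDerivAt g1 0 x := by
          have d1 := ((hvd1 x).hasDerivAt.mul (hCd x))
          have d2 := ((hvd x).hasDerivAt.mul ((hSd x).const_mul μ))
          have := d1.add d2
          convert this using 1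
          · rfl
          · rfl
          rw [hode x (Set.mem_Icc.mpr ⟨hx.1, le_of_lt hx.2⟩)]
          ring
        exact h1.hasDerivWithinAt
    intro x hx
    rw [key x hx, hg1def]
    simp [hneu, hCa, hSa]
  -- g2 := v' * Sn - v * (μ * C)
  set g2 : ℝ → ℂ := fun x => deriv v x * Sn x - v x * (μ * C x) with hg2def
  have hg2 : ∀ x ∈ Set.Icc a b, g2 x = -(μ * v a) := by
    have key : ∀ x ∈ Set.Icc a b, g2 x = g2 a := by
      apply constant_of_has_deriv_right_zero
      · apply Continuous.continuousOn
        exact (hvd1.continuous.mul (Complex.continuous_sin.comp (by fun_prop))).sub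
          (hvd.continuous.mul (continuous_const.mul (Complex.continuous_cos.comp (by fun_prop))))
      · intro x hx
        have h1 : HasDerivAt g2 0 x := by
          have d1 := ((hvd1 x).hasDerivAt.mul (hSd x))
          have d2 := ((hvd x).hasDerivAt.mul ((hCd x).const_mul μ))
          have := d1.sub d2
          convert this using 1
          · rfl
          · rfl
          rw [hode x (Set.mem_Icc.mpr ⟨hx.1, le_of_lt hx.2⟩)]
          ring
        exact h1.hasDerivWithinAt
    intro x hx
    rw [key x hx, hg2def]
    simp [hneu, hCa, hSa]
    ring
  -- solve
  have hval : ∀ x ∈ Set.Icc a b, v x = v a * C x := by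
    by_cases hμ : μ = 0
    · -- deriv v = 0 on Icc, so v constant
      have hdz : ∀ x ∈ Set.Icc a b, deriv v x = 0 := by
        intro x hx
        have := hg1 x hx
        rw [hg1def] at this
        simp [hμ] at this
        simpa [hC, hμ] using this
      have key : ∀ x ∈ Set.Icc a b, v x = v a := by
        apply constant_of_has_deriv_right_zero hvd.continuous.continuousOn
        intro x hx
        have : HasDerivAt v 0 x := by
          have := (hvd x).hasDerivAt
          rwa [hdz x (Set.mem_Icc.mpr ⟨hx.1, le_of_lt hx.2⟩)] at this
        exact this.hasDerivWithinAt
      intro x hx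
      rw [key x hx]
      simp [hC, hμ]
    · intro x hx
      have e1 : deriv v x * C x = -(μ * (v x * Sn x)) := by
        have := hg1 x hx; rw [hg1def] at this
        have : deriv v x * C x + v x * (μ * Sn x) = 0 := this
        linear_combination this
      have e2 : deriv v x * Sn x = μ * (v x * C x) - μ * v a := by
        have := hg2 x hx; rw [hg2def] at this
        linear_combination this
      have hp := hpyth x
      have e3 : μ * v x = μ * (v a * C x) := by
        linear_combination Sn x * e1 - C x * e2 - (μ * v x) * hp
      exact mul_left_cancel₀ hμ e3
  have hderiv : ∀ x ∈ Set.Icc a b, deriv v x = v a * (-(μ * Sn x)) := by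
    intro x hx
    have e1 : deriv v x * C x = -(μ * (v x * Sn x)) := by
      have := hg1 x hx; rw [hg1def] at this; linear_combination this
    have e2 : deriv v x * Sn x = μ * (v x * C x) - μ * v a := by
      have := hg2 x hx; rw [hg2def] at this; linear_combination this
    have hvx := hval x hx
    have hp := hpyth x
    have key : (deriv v x - v a * (-(μ * Sn x))) * (C x ^ 2 + Sn x ^ 2) = 0 := by
      rw [hvx] at e1 e2
      linear_combination C x * e1 + Sn x * e2 + (μ * v a * Sn x) * hp
    rw [hp, mul_one, sub_eq_zero] at key
    exact key
  constructor
  · intro x hx; rw [hval x hx, hC]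
    congr 2
  · intro x hx; rw [hderiv x hx, hS]
    congr 3


lemma cos_muC_eq_zero_iff (d : ℝ) (hd : 0 < d) (lam : ℝ) :
    Complex.cos (muC lam * (d/2)) = 0 ↔ lam ∈ PiN d := by
  unfold muC
  split_ifs with hl
  · rw [show ((Real.sqrt lam : ℂ) * ((d:ℂ)/2)) = ((Real.sqrt lam * (d/2) : ℝ) : ℂ) by push_cast; ring,
      ← Complex.ofReal_cos, Complex.ofReal_eq_zero, Real.cos_eq_zero_iff]
    constructor
    · rintro ⟨k, hk⟩
      have hπ := Real.pi_pos
      have hknn : 0 ≤ (k:ℝ) := by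
        by_contra hneg
        push_neg at hneg
        have h1 : (k:ℝ) ≤ -1 := by
          have : k < 0 := by exact_mod_cast (by exact_mod_cast hneg : (k:ℝ) < 0)
          have : k ≤ -1 := by omega
          exact_mod_cast this
        have h2 : (2*(k:ℝ)+1) * Real.pi / 2 ≤ -Real.pi/2 := by
          have : (2*(k:ℝ)+1) ≤ -1 := by linarith
          nlinarith
        have h3 : 0 ≤ Real.sqrt lam * (d/2) := by positivity
        linarith [hk ▸ h3]
      obtain ⟨n, rfl⟩ : ∃ n : ℕ, (k:ℤ) = n := ⟨k.toNat, (Int.toNat_of_nonneg (by exact_mod_cast hknn)).symm⟩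
      refine ⟨n + 1, by omega, ?_⟩
      have hs : Real.sqrt lam = Real.pi * (2*((n:ℝ)+1) - 1) / d := by
        have : Real.sqrt lam * (d/2) = (2*(n:ℝ)+1) * Real.pi / 2 := by exact_mod_cast hk
        field_simp at this ⊢
        nlinarith [this]
      calc lam = Real.sqrt lam ^ 2 := (Real.sq_sqrt hl).symm
        _ = (Real.pi * (2*((n+1:ℕ):ℝ) - 1) / d)^2 := by rw [hs]; push_cast; ring_nf
    · rintro ⟨k, hk1, rfl⟩
      have hπ := Real.pi_pos
      have hge : (1:ℝ) ≤ (k:ℝ) := by exact_mod_cast hk1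
      have hpos : 0 ≤ Real.pi * (2*(k:ℝ)-1) / d := by
        apply div_nonneg _ (le_of_lt hd)
        nlinarith
      refine ⟨(k:ℤ) - 1, ?_⟩
      rw [Real.sqrt_sq hpos]
      push_cast
      field_simp
      ring
  · push_neg at hl
    constructor
    · intro hc
      exfalso
      rw [show ((Real.sqrt (-lam) : ℂ) * Complex.I * ((d:ℂ)/2)) =
          ((Real.sqrt (-lam) * (d/2) : ℝ) : ℂ) * Complex.I by push_cast; ring,
        Complex.cos_mul_I, ← Complex.ofReal_cosh, Complex.ofReal_eq_zero] at hc
      exact absurd hc (ne_of_gt (Real.cosh_pos _))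
    · rintro ⟨k, hk1, hk⟩
      exfalso
      have : (0:ℝ) ≤ (Real.pi * (2*(k:ℝ)-1)/d)^2 := sq_nonneg _
      linarith [hk ▸ this]

lemma FN_identity (d : ℝ) (hd : 0 < d) (lam : ℝ)
    (hcos : Complex.cos (muC lam * (d/2)) ≠ 0) :
    (FN d lam : ℂ) * Complex.cos (muC lam * (d/2)) = 2 * muC lam * Complex.sin (muC lam * (d/2)) := by
  unfold FN muC at *
  rcases lt_trichotomy lam 0 with hneg | rfl | hpos
  · rw [if_neg (not_le.mpr hneg)] at hcos ⊢
    rw [if_neg (by linarith), if_neg (ne_of_lt hneg)]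
    set s := Real.sqrt (-lam) with hsdef
    have harg : (s:ℂ) * Complex.I * ((d:ℂ)/2) = ((s * (d/2) : ℝ):ℂ) * Complex.I := by push_cast; ring
    have hth : Real.tanh (d * s / 2) * Real.cosh (s * (d/2)) = Real.sinh (s * (d/2)) := by
      rw [Real.tanh_eq_sinh_div_cosh, show d * s / 2 = s * (d/2) by ring,
        div_mul_cancel₀ _ (ne_of_gt (Real.cosh_pos (s * (d/2))))]
    calc ((-2 * s * Real.tanh (d * s / 2) : ℝ) : ℂ) * Complex.cos ((s:ℂ) * Complex.I * ((d:ℂ)/2))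
        = ((-2 * s * Real.tanh (d*s/2) * Real.cosh (s*(d/2)) : ℝ) : ℂ) := by
          rw [harg, Complex.cos_mul_I, ← Complex.ofReal_cosh]; push_cast; ring
      _ = ((-2 * s * Real.sinh (s*(d/2)) : ℝ) : ℂ) := by
          rw [show -2*s*Real.tanh (d*s/2) * Real.cosh (s*(d/2))
            = -2*s*(Real.tanh (d*s/2) * Real.cosh (s*(d/2))) by ring, hth]
      _ = 2 * ((s:ℂ) * Complex.I) * Complex.sin ((s:ℂ) * Complex.I * ((d:ℂ)/2)) := by
          rw [harg, Complex.sin_mul_I, ← Complex.ofReal_sinh]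
          push_cast
          linear_combination (-(2*(s:ℂ)*Complex.sinh ((s:ℂ)*((d:ℂ)/2)))) * Complex.I_mul_I
  · simp
  · rw [if_pos (le_of_lt hpos)] at hcos ⊢
    rw [if_pos hpos]
    set s := Real.sqrt lam with hsdef
    have harg : (s:ℂ) * ((d:ℂ)/2) = ((s * (d/2) : ℝ):ℂ) := by push_cast; ring
    have hcR : Real.cos (s * (d/2)) ≠ 0 := by
      intro h0
      apply hcos
      rw [harg, ← Complex.ofReal_cos, h0, Complex.ofReal_zero]
    have ht : Real.tan (d * s / 2) * Real.cos (s * (d/2)) = Real.sin (s * (d/2)) := by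
      rw [Real.tan_eq_sin_div_cos, show d * s / 2 = s * (d/2) by ring, div_mul_cancel₀ _ hcR]
    calc ((2 * s * Real.tan (d * s / 2) : ℝ) : ℂ) * Complex.cos ((s:ℂ) * ((d:ℂ)/2))
        = ((2 * s * Real.tan (d*s/2) * Real.cos (s*(d/2)) : ℝ) : ℂ) := by
          rw [harg, ← Complex.ofReal_cos]; push_cast; ring
      _ = ((2 * s * Real.sin (s*(d/2)) : ℝ):ℂ) := by
          rw [show 2*s*Real.tan (d*s/2) * Real.cos (s*(d/2))
            = 2*s*(Real.tan (d*s/2) * Real.cos (s*(d/2))) by ring, ht]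
      _ = 2 * (s:ℂ) * Complex.sin ((s:ℂ)*((d:ℂ)/2)) := by
          rw [harg, ← Complex.ofReal_sin]; push_cast; ring


/-- `u` is a δ-Neumann eigenfunction for `(α, λ)` on `[x₋, x₊]`: `u` is continuous on
`[x₋, x₊]`, not identically zero there, its restrictions to `[x₋, y]` and `[y, x₊]`
(with `y` the midpoint) are twice continuously differentiable (encoded via `C²` extensions
`v`, `w`) and satisfy `-u'' = λ u` there, the one-sided derivatives satisfy
`u'(x₋) = u'(x₊) = 0`, and `u'(y+0) - u'(y-0) = α u(y)`. -/
def IsDeltaNeumannEF (xm xp α lam : ℝ) (u : ℝ → ℂ) : Prop :=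
  ContinuousOn u (Set.Icc xm xp) ∧
  (∃ x ∈ Set.Icc xm xp, u x ≠ 0) ∧
  ∃ v w : ℝ → ℂ,
    ContDiff ℝ 2 v ∧ ContDiff ℝ 2 w ∧
    Set.EqOn u v (Set.Icc xm ((xm + xp) / 2)) ∧
    Set.EqOn u w (Set.Icc ((xm + xp) / 2) xp) ∧
    (∀ x ∈ Set.Icc xm ((xm + xp) / 2), -(deriv (deriv v) x) = (lam : ℂ) * v x) ∧
    (∀ x ∈ Set.Icc ((xm + xp) / 2) xp, -(deriv (deriv w) x) = (lam : ℂ) * w x) ∧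
    deriv v xm = 0 ∧ deriv w xp = 0 ∧
    deriv w ((xm + xp) / 2) - deriv v ((xm + xp) / 2) = (α : ℂ) * u ((xm + xp) / 2)

lemma deriv_scaled (μ p q B : ℂ) :
    deriv (fun t : ℝ => B * Complex.cos (μ * (p * t + q)))
      = fun x : ℝ => B * (-(Complex.sin (μ * (p * x + q))) * (μ * p)) := by
  funext x
  exact ((hasDerivAt_ccos' μ p q x).const_mul B).deriv

lemma deriv2_scaled (μ p q B : ℂ) (x : ℝ) :
    deriv (deriv (fun t : ℝ => B * Complex.cos (μ * (p * t + q)))) x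
      = -((μ*p)^2 * (B * Complex.cos (μ * (p * x + q)))) := by
  rw [deriv_scaled]
  have h1 : HasDerivAt (fun x : ℝ => B * (-(Complex.sin (μ * (p * x + q))) * (μ * p)))
      (-((μ*p)^2 * (B * Complex.cos (μ * (p * x + q))))) x := by
    have := (((hasDerivAt_csin' μ p q x).neg).mul_const (μ * p)).const_mul B
    convert this using 1
    · rfl
    · rfl
    · ring
  exact h1.deriv

lemma contDiff_scaled (μ p q B : ℂ) :
    ContDiff ℝ 2 (fun t : ℝ => B * Complex.cos (μ * (p * t + q))) :=
  contDiff_const.mul (contDiff_ccos' μ p q)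

lemma construct (xm xp : ℝ) (h : xm < xp) (α lam : ℝ) (B : ℂ)
    (hvw : Complex.cos (muC lam * (((xp - xm)/2 : ℝ) : ℂ))
      = B * Complex.cos (muC lam * (((xp - xm)/2 : ℝ) : ℂ)))
    (hjump : (B + 1) * (muC lam * Complex.sin (muC lam * (((xp - xm)/2 : ℝ) : ℂ)))
      = (α : ℂ) * Complex.cos (muC lam * (((xp - xm)/2 : ℝ) : ℂ))) :
    ∃ u : ℝ → ℂ, IsDeltaNeumannEF xm xp α lam u := by
  set μ := muC lam with hμdef
  set y : ℝ := (xm + xp)/2 with hy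
  set v : ℝ → ℂ := fun t : ℝ => (1:ℂ) * Complex.cos (μ * ((1:ℂ) * t + (-xm : ℝ))) with hvdef
  set w : ℝ → ℂ := fun t : ℝ => B * Complex.cos (μ * ((-1:ℂ) * t + (xp : ℝ))) with hwdef
  set u : ℝ → ℂ := fun x => if x ≤ y then v x else w x with hudef
  have hxy : xm < y := by rw [hy]; linarith
  have hyp : y < xp := by rw [hy]; linarith
  -- argument conversions
  have hargv : ∀ x : ℝ, μ * ((1:ℂ) * x + ((-xm : ℝ):ℂ)) = μ * (((x - xm : ℝ)):ℂ) := by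
    intro x; push_cast; ring
  have hargvy : μ * ((1:ℂ) * (y:ℝ) + ((-xm : ℝ):ℂ)) = μ * (((xp - xm)/2 : ℝ) : ℂ) := by
    rw [hy]; push_cast; ring
  have hargwy : μ * ((-1:ℂ) * (y:ℝ) + ((xp : ℝ):ℂ)) = μ * (((xp - xm)/2 : ℝ) : ℂ) := by
    rw [hy]; push_cast; ring
  have hvy : v y = Complex.cos (μ * (((xp - xm)/2 : ℝ) : ℂ)) := by
    rw [hvdef]; simp only; rw [hargvy]; ring
  have hwy : w y = B * Complex.cos (μ * (((xp - xm)/2 : ℝ) : ℂ)) := by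
    rw [hwdef]; simp only; rw [hargwy]
  have hvwy : v y = w y := by rw [hvy, hwy]; exact hvw
  have hvcont : Continuous v := (contDiff_scaled μ 1 (-xm : ℝ) 1).continuous
  have hwcont : Continuous w := (contDiff_scaled μ (-1) (xp : ℝ) B).continuous
  refine ⟨u, ?_, ?_, v, w, contDiff_scaled μ 1 (-xm : ℝ) 1, contDiff_scaled μ (-1) (xp : ℝ) B,
    ?_, ?_, ?_, ?_, ?_, ?_, ?_⟩
  · -- continuity
    apply Continuous.continuousOn
    rw [hudef]
    exact Continuous.if_le hvcont hwcont continuous_id continuous_const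
      (fun x hx => by rw [hx]; exact hvwy)
  · -- nonzero at xm
    refine ⟨xm, Set.mem_Icc.mpr ⟨le_refl _, le_of_lt h⟩, ?_⟩
    rw [hudef]
    simp only [if_pos (le_of_lt hxy)]
    rw [hvdef]
    simp only [one_mul]
    rw [show (μ * ((xm:ℝ) + ((-xm : ℝ):ℂ))) = 0 by push_cast; ring]
    simp
  · -- EqOn u v
    intro x hx
    rw [hudef]
    simp only [if_pos (show x ≤ y from hx.2)]
  · -- EqOn u w
    intro x hx
    rw [hudef]
    by_cases hxle : x ≤ y
    · have : x = y := le_antisymm hxle hx.1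
      subst this
      simp only [if_pos le_rfl]
      exact hvwy
    · simp only [if_neg hxle]
  · -- ODE for v
    intro x hx
    rw [deriv2_scaled μ 1 (-xm : ℝ) 1 x]
    rw [show ((μ * (1:ℂ))^2 : ℂ) = (lam : ℂ) by rw [mul_one, hμdef, muC_sq]]
    ring
  · -- ODE for w
    intro x hx
    rw [deriv2_scaled μ (-1) (xp : ℝ) B x]
    rw [show ((μ * (-1:ℂ))^2 : ℂ) = (lam : ℂ) by rw [show (μ * (-1:ℂ))^2 = μ^2 by ring, hμdef, muC_sq]]
    ring
  · -- Neumann at xm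
    rw [deriv_scaled μ 1 (-xm : ℝ) 1]
    simp only [one_mul]
    rw [show (μ * ((xm:ℝ) + ((-xm : ℝ):ℂ))) = 0 by push_cast; ring]
    simp
  · -- Neumann at xp
    rw [deriv_scaled μ (-1) (xp : ℝ) B]
    show B * (-Complex.sin (μ * ((-1:ℂ) * (xp:ℝ) + ((xp:ℝ):ℂ))) * (μ * (-1))) = 0
    rw [show (μ * ((-1:ℂ) * (xp:ℝ) + ((xp : ℝ):ℂ))) = 0 by push_cast; ring]
    simp
  · -- jump
    rw [deriv_scaled μ 1 (-xm : ℝ) 1, deriv_scaled μ (-1) (xp : ℝ) B]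
    simp only
    rw [hargwy, hargvy]
    have huy : u y = Complex.cos (μ * (((xp - xm)/2 : ℝ) : ℂ)) := by
      rw [hudef]; simp only [if_pos le_rfl]; exact hvy
    rw [huy]
    linear_combination hjump


/-- A δ-Neumann eigenfunction for `(α, λ)` on `[x₋, x₊]` exists if and only if
`λ ∈ Π_d^N` or (`λ ∉ Π_d^N` and `F_d^N(λ) = α`), where `d = x₊ - x₋`. -/
theorem stmt7 (xm xp : ℝ) (h : xm < xp) (α lam : ℝ) :
    (∃ u : ℝ → ℂ, IsDeltaNeumannEF xm xp α lam u) ↔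
      (lam ∈ PiN (xp - xm) ∨ (lam ∉ PiN (xp - xm) ∧ FN (xp - xm) lam = α)) := by
  set d : ℝ := xp - xm with hd
  have hd0 : 0 < d := by rw [hd]; linarith
  set μ : ℂ := muC lam with hμ
  set y : ℝ := (xm + xp)/2 with hy
  have hxy : xm < y := by rw [hy]; linarith
  have hyp : y < xp := by rw [hy]; linarith
  have hdc : ((d/2 : ℝ) : ℂ) = ((y - xm : ℝ) : ℂ) := by rw [hd, hy]; push_cast; ring
  constructor
  · rintro ⟨u, hcont, ⟨x0, hx0mem, hx0⟩, v, w, hv, hw, huv, huw, hodev, hodew, hnv, hnw, hjump⟩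
    rw [← hy] at huv huw hodev hodew hjump
    by_cases hmem : lam ∈ PiN d
    · exact Or.inl hmem
    right
    refine ⟨hmem, ?_⟩
    have hcc : Complex.cos (μ * ((d/2 : ℝ):ℂ)) ≠ 0 := by
      intro h0
      exact hmem ((cos_muC_eq_zero_iff d hd0 lam).mp (by
        rw [show (muC lam * ((d:ℂ)/2)) = μ * ((d/2:ℝ):ℂ) by rw [← hμ]; push_cast; ring]
        exact h0))
    -- apply lemA to v
    have hodev' : ∀ x ∈ Set.Icc xm y, deriv (deriv v) x = -(μ^2 * v x) := by
      intro x hx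
      have := hodev x hx
      rw [hμ, muC_sq]
      linear_combination -this
    obtain ⟨hval, hder⟩ := lemA μ xm y hxy v hv hodev' hnv
    -- reflected w
    set c : ℝ := xm + xp with hc
    set w2 : ℝ → ℂ := fun t => w (c - t) with hw2def
    have hw2 : ContDiff ℝ 2 w2 := hw.comp (contDiff_const.sub contDiff_id)
    have hw' : ContDiff ℝ (1+1) w := by norm_num at hw ⊢; exact hw
    have hwd : Differentiable ℝ w := (contDiff_succ_iff_deriv.mp hw').1
    have hwd1 : Differentiable ℝ (deriv w) := ((contDiff_succ_iff_deriv.mp hw').2.2).differentiable one_ne_zero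
    have hin : ∀ t : ℝ, HasDerivAt (fun t : ℝ => c - t) (-1) t := by
      intro t
      simpa using (hasDerivAt_id t).const_sub c
    have hdw2 : ∀ t : ℝ, HasDerivAt w2 (-(deriv w (c - t))) t := by
      intro t
      have := ((hwd (c - t)).hasDerivAt).scomp t (hin t)
      simp [hw2def, Function.comp] at this
      exact this
    have hderiv_w2 : deriv w2 = fun t => -(deriv w (c - t)) :=
      funext fun t => (hdw2 t).deriv
    have hode2 : ∀ t ∈ Set.Icc xm y, deriv (deriv w2) t = -(μ^2 * w2 t) := by
      intro t ht
      have hmem2 : c - t ∈ Set.Icc y xp := by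
        constructor
        · rw [hy, hc]; rw [hy] at ht; linarith [ht.2]
        · rw [hc]; linarith [ht.1]
      have hdd : HasDerivAt (fun t : ℝ => -(deriv w (c - t))) (deriv (deriv w) (c - t)) t := by
        have := (((hwd1 (c - t)).hasDerivAt).scomp t (hin t)).neg
        simp [Function.comp] at this
        exact this
      rw [hderiv_w2, hdd.deriv]
      have := hodew (c - t) hmem2
      rw [hμ, muC_sq]
      simp only [hw2def]
      linear_combination -this
    have hneu2 : deriv w2 xm = 0 := by
      rw [hderiv_w2]
      simp only [hc]
      rw [show xm + xp - xm = xp by ring, hnw, neg_zero]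
    obtain ⟨hval2, hder2⟩ := lemA μ xm y hxy w2 hw2 hode2 hneu2
    -- evaluations at y
    have hyIcc : y ∈ Set.Icc xm y := Set.mem_Icc.mpr ⟨le_of_lt hxy, le_rfl⟩
    have hcyy : c - y = y := by rw [hc, hy]; ring
    set A : ℂ := v xm with hA
    set Bc : ℂ := w2 xm with hB
    set cc : ℂ := Complex.cos (μ * ((y:ℂ) - (xm:ℂ))) with hccdef
    set sn : ℂ := Complex.sin (μ * ((y:ℂ) - (xm:ℂ))) with hsndef
    have hcc' : cc ≠ 0 := by
      rw [hccdef, show (μ * ((y:ℂ) - (xm:ℂ))) = μ * ((d/2:ℝ):ℂ) by rw [hdc]; push_cast; ring]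
      exact hcc
    have hvy : v y = A * cc := hval y hyIcc
    have hdvy : deriv v y = A * (-(μ * sn)) := hder y hyIcc
    have hwy : w y = Bc * cc := by
      have := hval2 y hyIcc
      rw [hw2def] at this
      simp only [hcyy] at this
      exact this
    have hdwy : deriv w y = Bc * (μ * sn) := by
      have := hder2 y hyIcc
      rw [hderiv_w2] at this
      simp only [hcyy] at this
      linear_combination -this
    -- A = Bc, from continuity
    have huvy : u y = v y := huv hyIcc
    have huwy : u y = w y := huw (Set.mem_Icc.mpr ⟨le_rfl, le_of_lt hyp⟩)
    have hABcc : A * cc = Bc * cc := by rw [← hvy, ← hwy, ← huvy, ← huwy]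
    have hAB : A = Bc := mul_right_cancel₀ hcc' hABcc
    -- A ≠ 0
    have hAne : A ≠ 0 := by
      by_cases hx0le : x0 ≤ y
      · have hx0' : x0 ∈ Set.Icc xm y := Set.mem_Icc.mpr ⟨hx0mem.1, hx0le⟩
        have : u x0 = A * Complex.cos (μ * ((x0:ℂ) - (xm:ℂ))) := by
          rw [huv hx0', hval x0 hx0']
        intro hA0
        rw [this, hA0, zero_mul] at hx0
        exact hx0 rfl
      · push_neg at hx0le
        have hcx0 : c - x0 ∈ Set.Icc xm y := by
          constructor
          · rw [hc]; linarith [hx0mem.2]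
          · rw [hc, hy]; linarith
        have hwx0 : w x0 = Bc * Complex.cos (μ * (((c - x0 : ℝ):ℂ) - (xm:ℂ))) := by
          have := hval2 (c - x0) hcx0
          rw [hw2def] at this
          simp only at this
          rw [show c - (c - x0) = x0 by ring] at this
          exact this
        have : u x0 = w x0 := huw (Set.mem_Icc.mpr ⟨le_of_lt hx0le, hx0mem.2⟩)
        intro hA0
        rw [this, hwx0, ← hAB, hA0, zero_mul] at hx0
        exact hx0 rfl
    -- jump condition
    rw [hdwy, hdvy, huvy, hvy, ← hAB] at hjump
    have hkey : 2 * μ * sn = (α : ℂ) * cc := by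
      have h2 : A * (2 * μ * sn) = A * ((α : ℂ) * cc) := by linear_combination hjump
      exact mul_left_cancel₀ hAne h2
    have hid := FN_identity d hd0 lam (by
      rw [show (muC lam * ((d:ℂ)/2)) = μ * ((d/2:ℝ):ℂ) by rw [← hμ]; push_cast; ring]
      exact hcc)
    rw [← hμ] at hid
    rw [show (μ * ((d:ℂ)/2)) = μ * ((y:ℂ) - (xm:ℂ)) by
      rw [show ((d:ℂ)/2) = ((d/2:ℝ):ℂ) by push_cast; ring, hdc]; push_cast; ring] at hid
    rw [← hccdef, ← hsndef, hkey] at hid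
    have : (FN d lam : ℂ) = (α : ℂ) := mul_right_cancel₀ hcc' hid
    exact_mod_cast this
  · intro hyp2
    have hconv : muC lam * ((d:ℂ)/2) = μ * ((d/2:ℝ):ℂ) := by rw [← hμ]; push_cast; ring
    rcases hyp2 with hmem | ⟨hnmem, hF⟩
    · have hcc0 : Complex.cos (μ * ((d/2:ℝ):ℂ)) = 0 := by
        rw [← hconv]
        exact (cos_muC_eq_zero_iff d hd0 lam).mpr hmem
      apply construct xm xp h α lam (-1)
      · rw [← hd, ← hμ, hcc0]; ring
      · rw [← hd, ← hμ, hcc0]; ring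
    · have hcc : Complex.cos (μ * ((d/2:ℝ):ℂ)) ≠ 0 := by
        intro h0
        exact hnmem ((cos_muC_eq_zero_iff d hd0 lam).mp (by rw [hconv]; exact h0))
      have hid := FN_identity d hd0 lam (by rw [hconv]; exact hcc)
      rw [hconv] at hid
      rw [← hμ] at hid
      apply construct xm xp h α lam 1
      · rw [← hd, ← hμ]; ring
      · rw [← hd, ← hμ]
        rw [hF] at hid
        linear_combination -hid
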